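/- Let p be a prime, let T ≤ GL₂(ℚ_p) be the subgroup of invertible diagonal matrices, and set u_j = [[1, p^{−j}], [0, 1]] for j ∈ ℕ and w = [[0, 1], [1, 0]]. Then the double cosets T u_j I_p (j ≥ 0), T u_j w I_p (j ≥ 0), and T w I_p are pairwise disjoint and their union is GL₂(ℚ_p); that is, they form a complete set of distinct representatives of T\GL₂(ℚ_p)/I_p. -/

import Mathlib

/-- The matrix `u_j = [[1, p^{−j}], [0, 1]]` over `ℚ_p`. -/
noncomputable def uMat (p : ℕ) [Fact (Nat.Prime p)] (j : ℕ) : Matrix (Fin 2) (Fin 2) ℚ_[p] :=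
  !![1, (p : ℚ_[p]) ^ (-(j:ℤ)); 0, 1]

/-- The maximal compact subgroup `K_p = GL₂(ℤ_p)`, viewed as the set of invertible matrices
`k` over `ℚ_p` such that all entries of `k` and of `k⁻¹` have norm at most `1`. -/
def Kp (p : ℕ) [Fact (Nat.Prime p)] : Set (Matrix (Fin 2) (Fin 2) ℚ_[p]) :=
  {k | IsUnit k ∧ ∀ i j, ‖k i j‖ ≤ 1 ∧ ‖k⁻¹ i j‖ ≤ 1}

/-- The Iwahori subgroup: elements of `K_p` whose lower-left entry has norm `< 1`. -/
def Ip (p : ℕ) [Fact (Nat.Prime p)] : Set (Matrix (Fin 2) (Fin 2) ℚ_[p]) :=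
  {k | k ∈ Kp p ∧ ‖k 1 0‖ < 1}

/-- Representatives of `T\GL₂(ℚ_p)/I_p`: the families `u_j` (j ≥ 0), `u_j·w` (j ≥ 0),
and `w`, where `w = [[0,1],[1,0]]`. -/
noncomputable def rep17 (p : ℕ) [Fact (Nat.Prime p)] :
    ℕ ⊕ ℕ ⊕ Unit → Matrix (Fin 2) (Fin 2) ℚ_[p]
  | Sum.inl j => uMat p j
  | Sum.inr (Sum.inl j) => uMat p j * !![0, 1; 1, 0]
  | Sum.inr (Sum.inr _) => !![0, 1; 1, 0]

/-!
Right multiplication by `I_p` acts on each row `v` of `g` as an isometry for the sup norm, and,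
because `I_p` is upper triangular modulo `p`, it preserves whether the first entry of `v` attains
that norm. Left multiplication by `T` rescales the rows. Hence the two "first entry dominates"
flags and `‖det g‖ / (‖g 0‖ * ‖g 1‖)` are invariants of `T g I_p`; they take the values
`(j = 0, False, p⁻ʲ)` on `u_j`, `(True, True, p⁻ʲ)` on `u_j w` and `(False, True, 1)` on `w`.
Conversely, one column operation in `I_p` clears the smaller entry of the second row of `g`,
leaving, up to `T`, `[[1, x], [0, 1]]` or `[[x, 1], [1, 0]]`, and writing `x = ε p⁻ʲ` with `ε` a
unit brings these to a representative.
-/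

open Matrix

lemma pi_norm_fin_two {E : Type*} [SeminormedAddGroup E] (v : Fin 2 → E) :
    ‖v‖ = max ‖v 0‖ ‖v 1‖ := by
  simp [Pi.norm_def, Fin.univ_succ]

section Ultrametric

lemma norm_add_eq_iff_of_norm_lt {S : Type*} [SeminormedAddGroup S] [IsUltrametricDist S]
    {a b : S} {r : ℝ} (hb : ‖b‖ < r) : ‖a + b‖ = r ↔ ‖a‖ = r := by
  have hdom : ∀ {x y : S}, ‖y‖ < r → ‖x‖ = r → ‖x + y‖ = r := fun hy hx => by
    rw [IsUltrametricDist.norm_add_eq_max_of_norm_ne_norm (by linarith), hx,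
      max_eq_left hy.le]
  refine ⟨fun h => ?_, hdom hb⟩
  simpa using hdom (y := -b) (by rwa [norm_neg]) h

lemma norm_vecMul_le {R : Type*} [NormedRing R] [IsUltrametricDist R] {ι κ : Type*} [Fintype ι]
    [Fintype κ] (v : ι → R) {k : Matrix ι κ R} (hk : ∀ i j, ‖k i j‖ ≤ 1) : ‖v ᵥ* k‖ ≤ ‖v‖ := by
  refine (pi_norm_le_iff_of_nonneg (norm_nonneg v)).2 fun j => ?_
  refine IsUltrametricDist.norm_sum_le_of_forall_le_of_nonneg (norm_nonneg v) fun i _ => ?_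
  exact (norm_mul_le _ _).trans <|
    (mul_le_of_le_one_right (norm_nonneg _) (hk i j)).trans (norm_le_pi_norm v i)

variable {K : Type*} [NormedField K] [IsUltrametricDist K] {n : Type*} [Fintype n] [DecidableEq n]

lemma norm_det_le_one {k : Matrix n n K} (hk : ∀ i j, ‖k i j‖ ≤ 1) : ‖k.det‖ ≤ 1 := by
  rw [det_apply']
  refine IsUltrametricDist.norm_sum_le_of_forall_le_of_nonneg zero_le_one fun σ _ => ?_
  rcases Int.units_eq_one_or (Equiv.Perm.sign σ) with h | h <;>
  simp only [h, Units.val_one, Units.val_neg, Int.cast_one, Int.cast_neg, one_mul, neg_one_mul,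
    norm_neg, norm_prod] <;>
  exact Finset.prod_le_one (fun _ _ => norm_nonneg _) fun i _ => hk _ _

lemma norm_inv_apply_le_one {k : Matrix n n K} (hk : ∀ i j, ‖k i j‖ ≤ 1) (hdet : ‖k.det‖ = 1)
    (i j : n) : ‖k⁻¹ i j‖ ≤ 1 := by
  rw [inv_def, Matrix.smul_apply, smul_eq_mul, norm_mul, Ring.inverse_eq_inv', norm_inv, hdet,
    inv_one, one_mul, adjugate_apply]
  refine norm_det_le_one fun a b => ?_
  rcases eq_or_ne a j with rfl | ha
  · rw [updateRow_self]
    rcases eq_or_ne b i with rfl | hb <;> simp [*]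
  · rw [updateRow_ne ha]; exact hk a b

end Ultrametric

section Padic

variable {p : ℕ} [Fact (Nat.Prime p)]

lemma one_lt_prime_cast : (1 : ℝ) < p := by exact_mod_cast (Fact.out : p.Prime).one_lt

lemma mem_Kp_iff {k : Matrix (Fin 2) (Fin 2) ℚ_[p]} :
    k ∈ Kp p ↔ (∀ i j, ‖k i j‖ ≤ 1) ∧ ‖k.det‖ = 1 := by
  refine ⟨fun ⟨hu, hk⟩ => ⟨fun i j => (hk i j).1, ?_⟩, fun ⟨hk, hdet⟩ => ?_⟩
  · have hprod : ‖k.det‖ * ‖k⁻¹.det‖ = 1 := by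
      rw [← norm_mul, ← det_mul, mul_nonsing_inv _ ((isUnit_iff_isUnit_det k).1 hu), det_one,
        norm_one]
    have h1 := norm_det_le_one fun i j => (hk i j).1
    have h2 := norm_det_le_one fun i j => (hk i j).2
    nlinarith [norm_nonneg k.det, norm_nonneg k⁻¹.det]
  · have hu : IsUnit k.det :=
      isUnit_iff_ne_zero.2 (norm_ne_zero_iff.1 (by rw [hdet]; exact one_ne_zero))
    exact ⟨(isUnit_iff_isUnit_det k).2 hu, fun i j => ⟨hk i j, norm_inv_apply_le_one hk hdet i j⟩⟩

lemma inv_mem_Kp {k : Matrix (Fin 2) (Fin 2) ℚ_[p]} (hk : k ∈ Kp p) : k⁻¹ ∈ Kp p := by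
  obtain ⟨hu, hk⟩ := hk
  refine ⟨isUnit_nonsing_inv_iff.2 hu, fun i j => ⟨(hk i j).2, ?_⟩⟩
  rw [nonsing_inv_nonsing_inv _ ((isUnit_iff_isUnit_det k).1 hu)]
  exact (hk i j).1

lemma norm_vecMul_of_mem_Kp (v : Fin 2 → ℚ_[p]) {k : Matrix (Fin 2) (Fin 2) ℚ_[p]}
    (hk : k ∈ Kp p) : ‖v ᵥ* k‖ = ‖v‖ := by
  refine le_antisymm (norm_vecMul_le v fun i j => (hk.2 i j).1) ?_
  calc ‖v‖ = ‖v ᵥ* k ᵥ* k⁻¹‖ := by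
        rw [vecMul_vecMul, mul_nonsing_inv _ ((isUnit_iff_isUnit_det k).1 hk.1), vecMul_one]
    _ ≤ ‖v ᵥ* k‖ := norm_vecMul_le _ fun i j => ((inv_mem_Kp hk).2 i j).1

lemma norm_apply_zero_zero_of_mem_Ip {k : Matrix (Fin 2) (Fin 2) ℚ_[p]} (hk : k ∈ Ip p) :
    ‖k 0 0‖ = 1 := by
  obtain ⟨hle, hdet⟩ := mem_Kp_iff.1 hk.1
  have hsmall : ‖-(k 0 1 * k 1 0)‖ < 1 := by
    rw [norm_neg, norm_mul]
    exact (mul_le_of_le_one_left (norm_nonneg _) (hle 0 1)).trans_lt hk.2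
  rw [det_fin_two, sub_eq_add_neg, norm_add_eq_iff_of_norm_lt hsmall, norm_mul] at hdet
  nlinarith [hle 0 0, hle 1 1, norm_nonneg (k 0 0), norm_nonneg (k 1 1)]

lemma mem_Ip_of_norm {a b c d : ℚ_[p]} (ha : ‖a‖ ≤ 1) (hb : ‖b‖ ≤ 1) (hc : ‖c‖ < 1)
    (hd : ‖d‖ ≤ 1) (hdet : ‖a * d - b * c‖ = 1) : !![a, b; c, d] ∈ Ip p := by
  refine ⟨mem_Kp_iff.2 ⟨fun i j => ?_, by rwa [det_fin_two_of]⟩, hc⟩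
  fin_cases i <;> fin_cases j <;> simp [ha, hb, hc.le, hd]

lemma mul_mem_Ip {k l : Matrix (Fin 2) (Fin 2) ℚ_[p]} (hk : k ∈ Ip p) (hl : l ∈ Ip p) :
    k * l ∈ Ip p := by
  obtain ⟨hkle, hkdet⟩ := mem_Kp_iff.1 hk.1
  obtain ⟨hlle, hldet⟩ := mem_Kp_iff.1 hl.1
  refine ⟨mem_Kp_iff.2 ⟨fun i j => ?_, by rw [det_mul, norm_mul, hkdet, hldet, one_mul]⟩, ?_⟩
  · exact (norm_le_pi_norm (k i ᵥ* l) j).trans <| (norm_vecMul_le (k i) hlle).trans <|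
      (pi_norm_le_iff_of_nonneg zero_le_one).2 (hkle i)
  · rw [mul_apply, Fin.sum_univ_two]
    refine (IsUltrametricDist.norm_add_le_max _ _).trans_lt (max_lt ?_ ?_) <;> rw [norm_mul]
    · exact (mul_le_of_le_one_right (norm_nonneg _) (hlle 0 0)).trans_lt hk.2
    · exact (mul_le_of_le_one_left (norm_nonneg _) (hkle 1 1)).trans_lt hl.2

lemma norm_vecMul_apply_zero_eq_iff (v : Fin 2 → ℚ_[p]) {k : Matrix (Fin 2) (Fin 2) ℚ_[p]}
    (hk : k ∈ Ip p) : ‖(v ᵥ* k) 0‖ = ‖v ᵥ* k‖ ↔ ‖v 0‖ = ‖v‖ := by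
  rw [norm_vecMul_of_mem_Kp v hk.1]
  rcases eq_or_ne v 0 with rfl | hv
  · simp
  have hsmall : ‖v 1 * k 1 0‖ < ‖v‖ := by
    rw [norm_mul]
    exact (mul_le_mul_of_nonneg_right (norm_le_pi_norm v 1) (norm_nonneg _)).trans_lt
      (mul_lt_of_lt_one_right (norm_pos_iff.2 hv) hk.2)
  rw [vecMul, dotProduct, Fin.sum_univ_two, norm_add_eq_iff_of_norm_lt hsmall, norm_mul,
    norm_apply_zero_zero_of_mem_Ip hk, mul_one]

variable (p) in
def diagTorus : Set (Matrix (Fin 2) (Fin 2) ℚ_[p]) :=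
  {t | IsUnit t ∧ t 0 1 = 0 ∧ t 1 0 = 0}

lemma diag_mem_diagTorus {a b : ℚ_[p]} (ha : a ≠ 0) (hb : b ≠ 0) :
    !![a, 0; 0, b] ∈ diagTorus p :=
  ⟨(isUnit_iff_isUnit_det _).2 (by simp [ha, hb]), rfl, rfl⟩

lemma mul_mem_diagTorus {s t : Matrix (Fin 2) (Fin 2) ℚ_[p]} (hs : s ∈ diagTorus p)
    (ht : t ∈ diagTorus p) : s * t ∈ diagTorus p :=
  ⟨hs.1.mul ht.1, by simp [mul_apply, hs.2.1, ht.2.1], by simp [mul_apply, hs.2.2, ht.2.2]⟩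

lemma det_eq_of_mem_diagTorus {t : Matrix (Fin 2) (Fin 2) ℚ_[p]} (ht : t ∈ diagTorus p) :
    t.det = t 0 0 * t 1 1 := by
  rw [det_fin_two, ht.2.1, zero_mul, sub_zero]

lemma apply_self_ne_zero_of_mem_diagTorus {t : Matrix (Fin 2) (Fin 2) ℚ_[p]}
    (ht : t ∈ diagTorus p) (i : Fin 2) : t i i ≠ 0 := by
  have h : t 0 0 * t 1 1 ≠ 0 := by
    rw [← det_eq_of_mem_diagTorus ht]; exact ((isUnit_iff_isUnit_det t).1 ht.1).ne_zero
  fin_cases i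
  exacts [left_ne_zero_of_mul h, right_ne_zero_of_mul h]

lemma mul_mul_apply_of_mem_diagTorus {t : Matrix (Fin 2) (Fin 2) ℚ_[p]} (ht : t ∈ diagTorus p)
    (r k : Matrix (Fin 2) (Fin 2) ℚ_[p]) (i : Fin 2) : (t * r * k) i = t i i • (r i ᵥ* k) := by
  rw [mul_apply_eq_vecMul, ← smul_vecMul]
  congr 1
  ext j
  fin_cases i <;> simp [mul_apply, ht.2.1, ht.2.2]

variable (p) in
def doubleCoset (h : Matrix (Fin 2) (Fin 2) ℚ_[p]) : Set (Matrix (Fin 2) (Fin 2) ℚ_[p]) :=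
  {g | ∃ t k : Matrix (Fin 2) (Fin 2) ℚ_[p], t ∈ diagTorus p ∧ k ∈ Ip p ∧ g = t * h * k}

lemma mem_doubleCoset_trans {g h r : Matrix (Fin 2) (Fin 2) ℚ_[p]} (hg : g ∈ doubleCoset p h)
    (hh : h ∈ doubleCoset p r) : g ∈ doubleCoset p r := by
  obtain ⟨s, k, hs, hk, rfl⟩ := hg
  obtain ⟨t, l, ht, hl, rfl⟩ := hh
  exact ⟨s * t, l * k, mul_mem_diagTorus hs ht, mul_mem_Ip hl hk, by simp only [Matrix.mul_assoc]⟩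

noncomputable def cosetInvariant (g : Matrix (Fin 2) (Fin 2) ℚ_[p]) : Prop × Prop × ℝ :=
  (‖g 0 0‖ = ‖g 0‖, ‖g 1 0‖ = ‖g 1‖, ‖g.det‖ / (‖g 0‖ * ‖g 1‖))

lemma cosetInvariant_eq_of_mem_doubleCoset {g r : Matrix (Fin 2) (Fin 2) ℚ_[p]}
    (hg : g ∈ doubleCoset p r) : cosetInvariant g = cosetInvariant r := by
  obtain ⟨t, k, ht, hk, rfl⟩ := hg
  have hrow := mul_mul_apply_of_mem_diagTorus ht r k
  have ht0 : ∀ i, ‖t i i‖ ≠ 0 := fun i =>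
    norm_ne_zero_iff.2 (apply_self_ne_zero_of_mem_diagTorus ht i)
  have hnorm : ∀ i, ‖(t * r * k) i‖ = ‖t i i‖ * ‖r i‖ := fun i => by
    rw [hrow, norm_smul, norm_vecMul_of_mem_Kp _ hk.1]
  have hflag : ∀ i, (‖(t * r * k) i 0‖ = ‖(t * r * k) i‖) = (‖r i 0‖ = ‖r i‖) := fun i => by
    rw [hrow, Pi.smul_apply, norm_smul, norm_smul, mul_right_inj' (ht0 i),
      norm_vecMul_apply_zero_eq_iff _ hk]
  have hdet : ‖(t * r * k).det‖ = ‖t 0 0‖ * ‖t 1 1‖ * ‖r.det‖ := by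
    rw [det_mul, det_mul, det_eq_of_mem_diagTorus ht, norm_mul, norm_mul, norm_mul,
      (mem_Kp_iff.1 hk.1).2, mul_one]
  rw [cosetInvariant, cosetInvariant, hflag 0, hflag 1, hnorm, hnorm, hdet, mul_mul_mul_comm,
    mul_div_mul_left _ _ (mul_ne_zero (ht0 0) (ht0 1))]

lemma cosetInvariant_uMat (j : ℕ) :
    cosetInvariant (uMat p j) = (j = 0, False, ((p : ℝ) ^ j)⁻¹) := by
  have h1 : 1 ≤ (p : ℝ) ^ j := one_le_pow₀ one_lt_prime_cast.le
  have hj : 1 = (p : ℝ) ^ j ↔ j = 0 := by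
    rw [← pow_zero (p : ℝ), pow_right_inj₀ (zero_lt_one.trans one_lt_prime_cast)
      one_lt_prime_cast.ne', eq_comm]
  simp [cosetInvariant, uMat, pi_norm_fin_two, max_eq_right h1, hj]

lemma cosetInvariant_uMat_mul_swap (j : ℕ) :
    cosetInvariant (uMat p j * !![0, 1; 1, 0]) = (True, True, ((p : ℝ) ^ j)⁻¹) := by
  have h1 : 1 ≤ (p : ℝ) ^ j := one_le_pow₀ one_lt_prime_cast.le
  simp [cosetInvariant, uMat, pi_norm_fin_two, max_eq_left h1]

lemma cosetInvariant_swap :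
    cosetInvariant (!![0, 1; 1, 0] : Matrix (Fin 2) (Fin 2) ℚ_[p]) = (False, True, 1) := by
  simp [cosetInvariant, pi_norm_fin_two]

lemma cosetInvariant_rep17_injective : Function.Injective fun c => cosetInvariant (rep17 p c) := by
  have hp := one_lt_prime_cast (p := p)
  rintro (j | j | ⟨⟩) (j' | j' | ⟨⟩) h <;>
    simp_all [rep17, cosetInvariant_uMat, cosetInvariant_uMat_mul_swap, cosetInvariant_swap,
      pow_right_inj₀ (zero_lt_one.trans hp) hp.ne']

lemma exists_norm_eq_one_mul_zpow {x : ℚ_[p]} (hx : 1 ≤ ‖x‖) :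
    ∃ (j : ℕ) (ε : ℚ_[p]), ‖ε‖ = 1 ∧ x = ε * (p : ℚ_[p]) ^ (-(j : ℤ)) := by
  have hnorm := Padic.norm_eq_zpow_neg_valuation (norm_pos_iff.1 (zero_lt_one.trans_le hx))
  rw [hnorm, one_le_zpow_iff_right₀ one_lt_prime_cast] at hx
  obtain ⟨j, hj⟩ := Int.eq_ofNat_of_zero_le hx
  refine ⟨j, x * (p : ℚ_[p]) ^ (j : ℤ), ?_, ?_⟩
  · rw [norm_mul, hnorm, hj, Padic.norm_p_zpow,
      ← zpow_add₀ (zero_lt_one.trans one_lt_prime_cast).ne', add_neg_cancel, zpow_zero]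
  · rw [mul_assoc, ← zpow_add₀ (Nat.cast_ne_zero.2 (Fact.out : p.Prime).ne_zero), add_neg_cancel,
      zpow_zero, mul_one]

lemma mem_doubleCoset_upper_or_antidiag {a b c d : ℚ_[p]} (hdet : a * d - b * c ≠ 0) :
    (∃ x, !![a, b; c, d] ∈ doubleCoset p !![1, x; 0, 1]) ∨
      ∃ x, !![a, b; c, d] ∈ doubleCoset p !![x, 1; 1, 0] := by
  rcases lt_or_ge ‖c‖ ‖d‖ with h | h
  · have hd : d ≠ 0 := norm_pos_iff.1 ((norm_nonneg _).trans_lt h)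
    refine .inl ⟨b * d / (a * d - b * c), !![(a * d - b * c) / d, 0; 0, d], !![1, 0; c / d, 1],
      diag_mem_diagTorus (div_ne_zero hdet hd) hd,
      mem_Ip_of_norm (by simp) (by simp) ?_ (by simp) (by simp), ?_⟩
    · rwa [norm_div, div_lt_one (norm_pos_iff.2 hd)]
    · ext i j
      fin_cases i <;> fin_cases j <;> simp [field]
  · have hc : c ≠ 0 := by
      rintro rfl
      exact hdet (by rw [norm_le_zero_iff.1 (h.trans_eq norm_zero)]; ring)
    have hdet' : b * c - a * d ≠ 0 := by rwa [← neg_sub, neg_ne_zero] at hdet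
    refine .inr ⟨a * c / (b * c - a * d), !![(b * c - a * d) / c, 0; 0, c],
      !![1, d / c; 0, 1], diag_mem_diagTorus (div_ne_zero hdet' hc) hc,
      mem_Ip_of_norm (by simp) ?_ (by simp) (by simp) (by simp), ?_⟩
    · rwa [norm_div, div_le_one (norm_pos_iff.2 hc)]
    · ext i j
      fin_cases i <;> fin_cases j <;> simp [field, hdet']

lemma exists_upper_mem_doubleCoset_uMat (x : ℚ_[p]) :
    ∃ j, !![1, x; 0, 1] ∈ doubleCoset p (uMat p j) := by
  rcases le_or_gt ‖x‖ 1 with hx | hx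
  · refine ⟨0, !![1, 0; 0, 1], !![1, x - 1; 0, 1], diag_mem_diagTorus one_ne_zero one_ne_zero,
      mem_Ip_of_norm (by simp) ?_ (by simp) (by simp) (by simp), ?_⟩
    · rw [sub_eq_add_neg]
      exact (IsUltrametricDist.norm_add_le_max _ _).trans (max_le hx (by simp))
    · simp [uMat]
  · obtain ⟨j, ε, hε, rfl⟩ := exists_norm_eq_one_mul_zpow hx.le
    have hε0 : ε ≠ 0 := norm_ne_zero_iff.1 (by rw [hε]; exact one_ne_zero)
    refine ⟨j, !![ε, 0; 0, 1], !![ε⁻¹, 0; 0, 1], diag_mem_diagTorus hε0 one_ne_zero,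
      mem_Ip_of_norm (by simp [hε]) (by simp) (by simp) (by simp) (by simp [hε]), ?_⟩
    simp [uMat, hε0]

lemma exists_antidiag_mem_doubleCoset_rep17 (x : ℚ_[p]) :
    ∃ c, !![x, 1; 1, 0] ∈ doubleCoset p (rep17 p (Sum.inr c)) := by
  rcases lt_or_ge ‖x‖ 1 with hx | hx
  · refine ⟨Sum.inr (), !![1, 0; 0, 1], !![1, 0; x, 1], diag_mem_diagTorus one_ne_zero one_ne_zero,
      mem_Ip_of_norm (by simp) (by simp) hx (by simp) (by simp), ?_⟩
    simp [rep17]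
  · obtain ⟨j, ε, hε, rfl⟩ := exists_norm_eq_one_mul_zpow hx
    have hε0 : ε ≠ 0 := norm_ne_zero_iff.1 (by rw [hε]; exact one_ne_zero)
    refine ⟨Sum.inl j, !![ε, 0; 0, 1], !![1, 0; 0, ε⁻¹], diag_mem_diagTorus hε0 one_ne_zero,
      mem_Ip_of_norm (by simp) (by simp) (by simp) (by simp [hε]) (by simp [hε]), ?_⟩
    simp [rep17, uMat, hε0]

lemma exists_mem_doubleCoset_rep17 {g : Matrix (Fin 2) (Fin 2) ℚ_[p]} (hg : IsUnit g) :
    ∃ c, g ∈ doubleCoset p (rep17 p c) := by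
  have hdet : g 0 0 * g 1 1 - g 0 1 * g 1 0 ≠ 0 := by
    rw [← det_fin_two]; exact ((isUnit_iff_isUnit_det g).1 hg).ne_zero
  rw [eta_fin_two g]
  rcases mem_doubleCoset_upper_or_antidiag hdet with ⟨x, hx⟩ | ⟨x, hx⟩
  · obtain ⟨j, hj⟩ := exists_upper_mem_doubleCoset_uMat x
    exact ⟨Sum.inl j, mem_doubleCoset_trans hx hj⟩
  · obtain ⟨c, hc⟩ := exists_antidiag_mem_doubleCoset_rep17 x
    exact ⟨Sum.inr c, mem_doubleCoset_trans hx hc⟩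

end Padic

/-- The double cosets `T u_j I_p` (j ≥ 0), `T u_j w I_p` (j ≥ 0) and `T w I_p` are pairwise
disjoint with union `GL₂(ℚ_p)`, where `T` is the diagonal torus. -/
theorem stmt17 (p : ℕ) [Fact (Nat.Prime p)]
    (g : Matrix (Fin 2) (Fin 2) ℚ_[p]) (hg : IsUnit g) :
    ∃! c : ℕ ⊕ ℕ ⊕ Unit, ∃ t k : Matrix (Fin 2) (Fin 2) ℚ_[p],
      (IsUnit t ∧ t 0 1 = 0 ∧ t 1 0 = 0) ∧ k ∈ Ip p ∧ g = t * rep17 p c * k := by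
  obtain ⟨c, hc⟩ := exists_mem_doubleCoset_rep17 hg
  exact ⟨c, hc, fun c' hc' => cosetInvariant_rep17_injective <|
    (cosetInvariant_eq_of_mem_doubleCoset hc').symm.trans (cosetInvariant_eq_of_mem_doubleCoset hc)⟩
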